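/- arXiv:2403.18400 — 3 statements merged into one kernel-verified Lean document; each statement's English description precedes it below -/
import Mathlib

section
/- Let A ∈ ℝ^{n×n} be a symmetric positive definite matrix with eigenvalue decomposition A = U·S·Uᵀ, where U is orthogonal and S is diagonal with strictly positive diagonal entries, and let ε > 0. Define the diagonal matrix Ŝ with entries Ŝ_{ii} = 1/(S_{ii} + ε·S_{ii}^{1/2}). If U·Ŝ·S·Uᵀ has block-diagonal form (n₁, …, n_r), then U·S^{-1}·Ŝ·Uᵀ and U·S·Uᵀ = A also have block-diagonal form (n₁, …, n_r). -/
/-!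
Since `x ↦ x / (x + ε √x)` is injective on `(0, ∞)`, every function of the eigenvalues `dᵢ`
is a function of the eigenvalues of `M = U Ŝ S Uᵀ`. By Lagrange interpolation at the finitely
many eigenvalues it is therefore the polynomial `p(M)` for a suitable `p`, and block-diagonal
matrices of a fixed form are closed under polynomials because they form a subalgebra.
-/

open Matrix Polynomial

/-- The form `(n₁, …, n_r)` is encoded by the monotone map `b` sending an index to its block. -/
def IsBlockDiag {n r : ℕ} (b : Fin n → Fin r) (A : Matrix (Fin n) (Fin n) ℝ) : Prop :=
  ∀ i j, b i ≠ b j → A i j = 0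

theorem aeval_conj_diagonal {m R : Type*} [Fintype m] [DecidableEq m] [CommRing R]
    {U : Matrix m m R} (hU : Uᵀ * U = 1) (g : m → R) (p : R[X]) :
    aeval (U * diagonal g * Uᵀ) p = U * diagonal (fun i => p.eval (g i)) * Uᵀ := by
  let u : (Matrix m m R)ˣ := ⟨U, Uᵀ, mul_eq_one_comm.mp hU, hU⟩
  have hconj := aeval_algHom_apply
    (MulSemiringAction.toAlgEquiv R _ (ConjAct.toConjAct u)).toAlgHom (diagonal g) p
  have hdiag : aeval (diagonal g) p = diagonal fun i => p.eval (g i) := by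
    rw [← diagonalAlgHom_apply (R := R), aeval_algHom_apply, diagonalAlgHom_apply, aeval_pi_apply]
    rfl
  simpa only [u, hdiag, AlgEquiv.coe_toAlgHom, MulSemiringAction.toAlgEquiv_apply,
    ConjAct.units_smul_def, ConjAct.ofConjAct_toConjAct, Units.inv_mk] using hconj

theorem exists_eval_eq_of_factorsThrough {K ι : Type*} [Field K] [Fintype ι] {g h : ι → K}
    (hgh : h.FactorsThrough g) : ∃ p : K[X], ∀ i, p.eval (g i) = h i := by
  classical
  refine ⟨Lagrange.interpolate (Finset.univ.image g) id (Function.extend g h 0), fun i => ?_⟩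
  rw [← id_eq (g i), Lagrange.eval_interpolate_at_node _ (Set.injOn_id _)
    (Finset.mem_image_of_mem g (Finset.mem_univ i)), hgh.extend_apply]

theorem injOn_inv_add_mul_sqrt_mul {ε : ℝ} (hε : 0 < ε) :
    Set.InjOn (fun x => (x + ε * √x)⁻¹ * x) (Set.Ioi 0) := by
  have hform (x : ℝ) (hx : 0 < x) : (x + ε * √x)⁻¹ * x = √x / (√x + ε) := by
    have hsx : 0 < √x := Real.sqrt_pos.mpr hx
    field_simp
    linear_combination -ε * Real.mul_self_sqrt hx.le
  intro x hx y hy hxy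
  have hsx : 0 < √x := Real.sqrt_pos.mpr hx
  have hsy : 0 < √y := Real.sqrt_pos.mpr hy
  simp only [hform x hx, hform y hy] at hxy
  rw [div_eq_div_iff (by positivity) (by positivity)] at hxy
  have hsqrt : √x = √y := by nlinarith
  rwa [Real.sqrt_inj hx.le hy.le] at hsqrt

section BlockDiag

variable {n r : ℕ} (b : Fin n → Fin r)

def blockDiagSubalgebra : Subalgebra ℝ (Matrix (Fin n) (Fin n) ℝ) where
  carrier := {A | IsBlockDiag b A}
  mul_mem' {X Y} hX hY i j hij := by
    rw [mul_apply]
    refine Finset.sum_eq_zero fun k _ => ?_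
    by_cases hik : b i = b k
    · rw [hY k j (hik ▸ hij), mul_zero]
    · rw [hX i k hik, zero_mul]
  add_mem' hX hY i j hij := by simp [hX i j hij, hY i j hij]
  algebraMap_mem' c i j hij := by
    rw [algebraMap_eq_diagonal]
    exact diagonal_apply_ne _ (ne_of_apply_ne b hij)

variable {b}

theorem IsBlockDiag.aeval {M : Matrix (Fin n) (Fin n) ℝ} (hM : IsBlockDiag b M) (p : ℝ[X]) :
    IsBlockDiag b (aeval M p) :=
  aeval_subalgebra_coe p (blockDiagSubalgebra b) ⟨M, hM⟩ ▸
    (Polynomial.aeval (⟨M, hM⟩ : blockDiagSubalgebra b) p).2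

theorem IsBlockDiag.conj_diagonal_of_factorsThrough {U : Matrix (Fin n) (Fin n) ℝ}
    (hU : Uᵀ * U = 1) {g h : Fin n → ℝ} (hgh : h.FactorsThrough g)
    (hg : IsBlockDiag b (U * diagonal g * Uᵀ)) : IsBlockDiag b (U * diagonal h * Uᵀ) := by
  obtain ⟨p, hp⟩ := exists_eval_eq_of_factorsThrough hgh
  simpa only [aeval_conj_diagonal hU, hp] using hg.aeval p

end BlockDiag

theorem stmt3_general {n r : ℕ} (b : Fin n → Fin r)
    (A U : Matrix (Fin n) (Fin n) ℝ) (d : Fin n → ℝ) (hd : ∀ i, 0 < d i)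
    (hU : Uᵀ * U = 1)
    (hAeig : A = U * Matrix.diagonal d * Uᵀ)
    (ε : ℝ) (hε : 0 < ε)
    (hblock : IsBlockDiag b
      (U * Matrix.diagonal (fun i => (d i + ε * Real.sqrt (d i))⁻¹ * d i) * Uᵀ)) :
    IsBlockDiag b
      (U * Matrix.diagonal (fun i => (d i)⁻¹ * (d i + ε * Real.sqrt (d i))⁻¹) * Uᵀ) ∧
    IsBlockDiag b A := by
  have hfactor (f : ℝ → ℝ) :
      (fun i => f (d i)).FactorsThrough fun i => (d i + ε * √(d i))⁻¹ * d i :=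
    fun i j hij => congrArg f (injOn_inv_add_mul_sqrt_mul hε (hd i) (hd j) hij)
  refine ⟨hblock.conj_diagonal_of_factorsThrough hU (hfactor fun x => x⁻¹ * (x + ε * √x)⁻¹), ?_⟩
  rw [hAeig]
  exact hblock.conj_diagonal_of_factorsThrough hU (hfactor id)

/-- Let `A = U S Uᵀ` be symmetric positive definite (`U` orthogonal, `S = diag d`, `d > 0`),
let `ε > 0` and `Ŝ = diag (1 / (dᵢ + ε dᵢ^{1/2}))`.  If `U Ŝ S Uᵀ` has block-diagonal
form `(n₁, …, n_r)`, then so do `U S⁻¹ Ŝ Uᵀ` and `U S Uᵀ = A`. -/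
theorem stmt3 {n r : ℕ} (b : Fin n → Fin r) (hb : Monotone b)
    (A U : Matrix (Fin n) (Fin n) ℝ) (d : Fin n → ℝ) (hd : ∀ i, 0 < d i)
    (hU : Uᵀ * U = 1) (hUU : U * Uᵀ = 1)
    (hAeig : A = U * Matrix.diagonal d * Uᵀ) (hA : A.PosDef)
    (ε : ℝ) (hε : 0 < ε)
    (hblock : IsBlockDiag b
      (U * Matrix.diagonal (fun i => (d i + ε * Real.sqrt (d i))⁻¹ * d i) * Uᵀ)) :
    IsBlockDiag b
      (U * Matrix.diagonal (fun i => (d i)⁻¹ * (d i + ε * Real.sqrt (d i))⁻¹) * Uᵀ) ∧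
    IsBlockDiag b A :=
  stmt3_general b A U d hd hU hAeig ε hε hblock
end

section
/- Let W ∈ ℝ^{r×r} be diagonal with W₁₁ ≥ W₂₂ ≥ ⋯ ≥ W_{rr} > 0, and let X ∈ ℝ^{m×n} with singular values σ₁ ≥ ⋯ ≥ σ_{rank(X)} > 0 and rank(X) ≤ r. Then the minimum of (1/2)(‖A·W^{-1}‖_F² + ‖B‖_F²) over all A ∈ ℝ^{m×r} and B ∈ ℝ^{n×r} with X = A·Bᵀ is attained and equals Σ_{i=1}^{rank(X)} σ_i / W_{ii}. -/
open Matrix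

/-- Squared Frobenius norm. -/
noncomputable def frobSq {m n : ℕ} (A : Matrix (Fin m) (Fin n) ℝ) : ℝ :=
  ∑ i, ∑ j, (A i j) ^ 2

/-!
Let `a j`, `b j` be the columns of `Uᵀ A` and `Vᵀ B`. Then `∑ j, a j (b j)ᵀ = diag σ`, and
`‖a j‖`, `‖b j‖` are at most the norms of the columns of `A` and `B`. Taking the trace of
`diag σ` against the projection onto the orthogonal complement of `span {a 0, …, a (k-1)}` gives
the tail bounds `∑_{i ≥ k} σ i ≤ ∑_{j ≥ k} ‖a j‖ ‖b j‖`. As `1 / w` is nondecreasing, Abel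
summation turns them into `∑ σ i / w i ≤ ∑ ‖a j‖ ‖b j‖ / w j`, and AM-GM on each column bounds
this by the objective. Equality holds for `A = U diag √(σ w)` and `B = V diag √(σ / w)`, padded
with zero columns.
-/

open Finset RealInnerProductSpace

theorem Function.Injective.sum_extend_zero {ι κ α M : Type*} [Fintype ι] [Fintype κ] [Zero α]
    [AddCommMonoid M] {f : ι → κ} (hf : f.Injective) (g : ι → α) (G : κ → α → M)
    (hG : ∀ j, G j 0 = 0) : ∑ j, G j (Function.extend f g 0 j) = ∑ i, G (f i) (g i) :=
  (Fintype.sum_of_injective f hf _ _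
    (fun j hj => by rw [Function.extend_apply' _ _ _ (by simpa using hj), Pi.zero_apply, hG])
    (fun i => by rw [hf.extend_apply])).symm

theorem Finset.sum_le_sum_mul_of_card_le {ι : Type*} [Fintype ι] (S : Finset ι)
    {σ p : ι → ℝ} {t : ℝ} (ht : 0 ≤ t) (hσS : ∀ i ∈ S, σ i ≤ t) (hσSc : ∀ i ∉ S, t ≤ σ i)
    (hp₀ : ∀ i, 0 ≤ p i) (hp₁ : ∀ i, p i ≤ 1) (hcard : (#S : ℝ) ≤ ∑ i, p i) :
    ∑ i ∈ S, σ i ≤ ∑ i, σ i * p i := by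
  classical
  have hterm : ∀ i, σ i * ((if i ∈ S then 1 else 0) - p i) ≤
      t * ((if i ∈ S then 1 else 0) - p i) := by
    intro i
    by_cases hi : i ∈ S
    · simpa [hi] using mul_le_mul_of_nonneg_right (hσS i hi) (sub_nonneg.mpr (hp₁ i))
    · simpa [hi] using mul_le_mul_of_nonneg_right (hσSc i hi) (hp₀ i)
  have hsum := Finset.sum_le_sum fun i (_ : i ∈ univ) => hterm i
  simp only [mul_sub, mul_ite, mul_one, mul_zero, Finset.sum_sub_distrib,
    Fintype.sum_extend_by_zero, ← Finset.mul_sum, Finset.sum_const, nsmul_eq_mul] at hsum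
  nlinarith [mul_le_mul_of_nonneg_left hcard ht]

theorem Antitone.tail_sum_le_sum_mul {s k : ℕ} {σ p : Fin s → ℝ} (hσ : Antitone σ)
    (hσ₀ : ∀ i, 0 ≤ σ i) (hp₀ : ∀ i, 0 ≤ p i) (hp₁ : ∀ i, p i ≤ 1)
    (hp : (s : ℝ) - k ≤ ∑ i, p i) :
    ∑ i ∈ univ.filter (fun i : Fin s => k ≤ (i : ℕ)), σ i ≤ ∑ i, σ i * p i := by
  by_cases hks : k < s
  · have hcard : #(univ.filter (fun i : Fin s => k ≤ (i : ℕ))) + k = s := by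
      have := card_filter_add_card_filter_not (s := (univ : Finset (Fin s)))
        (fun i : Fin s => k ≤ (i : ℕ))
      simp only [not_le, Fin.card_filter_val_lt, card_univ, Fintype.card_fin] at this
      omega
    refine Finset.sum_le_sum_mul_of_card_le _ (hσ₀ ⟨k, hks⟩)
      (fun i hi => hσ (show ⟨k, hks⟩ ≤ i by simpa [Fin.le_def] using hi))
      (fun i hi => hσ (show i ≤ ⟨k, hks⟩ by simp [Fin.le_def] at hi ⊢; omega)) hp₀ hp₁ ?_
    have : (#(univ.filter (fun i : Fin s => k ≤ (i : ℕ))) : ℝ) + k = s := by exact_mod_cast hcard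
    linarith
  · rw [filter_false_of_mem fun i _ => by omega, sum_empty]
    exact sum_nonneg fun i _ => mul_nonneg (hσ₀ i) (hp₀ i)

theorem Fin.sum_mul_nonneg_of_forall_tail_sum_nonneg {n : ℕ} (h v : Fin n → ℝ)
    (hv : Monotone v) (hv₀ : ∀ j, 0 ≤ v j)
    (htail : ∀ k : ℕ, 0 ≤ ∑ j ∈ univ.filter (fun j : Fin n => k ≤ (j : ℕ)), h j) :
    0 ≤ ∑ j, h j * v j := by
  induction n with
  | zero => simp
  | succ n ih =>
    have hshift : ∀ k : ℕ, ∑ j ∈ univ.filter (fun j : Fin n => k ≤ (j : ℕ)), h j.succ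
        = ∑ j ∈ univ.filter (fun j : Fin (n + 1) => k + 1 ≤ (j : ℕ)), h j := by
      intro k
      simp [Finset.sum_filter, Fin.sum_univ_succ]
    have hsplit : ∑ j, h j * v j
        = v 0 * ∑ j, h j + ∑ j : Fin n, h j.succ * (v j.succ - v 0) := by
      simp only [Fin.sum_univ_succ, mul_sub, Finset.sum_sub_distrib, ← Finset.sum_mul]
      ring
    rw [hsplit]
    refine add_nonneg (mul_nonneg (hv₀ 0) (by simpa using htail 0)) ?_
    exact ih _ _ (fun i j hij => by simpa using hv (Fin.succ_le_succ_iff.mpr hij))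
      (fun j => sub_nonneg.mpr (hv (Fin.zero_le _))) (fun k => (hshift k).symm ▸ htail (k + 1))

theorem Submodule.trace_starProjection {𝕜 E : Type*} [RCLike 𝕜] [NormedAddCommGroup E]
    [InnerProductSpace 𝕜 E] [FiniteDimensional 𝕜 E] (K : Submodule 𝕜 E) :
    LinearMap.trace 𝕜 E K.starProjection = Module.finrank 𝕜 K := by
  have h := LinearMap.IsIdempotentElem.isProj_range _
    K.isSymmetricProjection_starProjection.isIdempotentElem
  rw [h.trace]
  exact congrArg (fun L : Submodule 𝕜 E => (Module.finrank 𝕜 L : 𝕜)) K.range_starProjection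

theorem OrthonormalBasis.sum_inner_starProjection_self {ι E : Type*} [Fintype ι]
    [NormedAddCommGroup E] [InnerProductSpace ℝ E] [FiniteDimensional ℝ E]
    (e : OrthonormalBasis ι ℝ E) (K : Submodule ℝ E) :
    ∑ i, ⟪K.starProjection (e i), e i⟫ = Module.finrank ℝ K := by
  rw [← K.trace_starProjection, LinearMap.trace_eq_sum_inner _ e]
  simp [real_inner_comm]

theorem OrthonormalBasis.sum_inner_map_eq_sum_mul_inner {ι κ E : Type*} [Fintype ι] [Fintype κ]
    [NormedAddCommGroup E] [InnerProductSpace ℝ E] (e : OrthonormalBasis ι ℝ E)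
    {σ : ι → ℝ} {a b : κ → E} (hab : ∀ i, ∑ j, ⟪e i, b j⟫ • a j = σ i • e i) (T : E →ₗ[ℝ] E) :
    ∑ j, ⟪T (a j), b j⟫ = ∑ i, σ i * ⟪T (e i), e i⟫ := by
  calc ∑ j, ⟪T (a j), b j⟫ = ∑ i, ∑ j, ⟪e i, b j⟫ * ⟪T (a j), e i⟫ := by
        rw [Finset.sum_comm]
        simp_rw [mul_comm ⟪e _, b _⟫, e.sum_inner_mul_inner]
    _ = ∑ i, ⟪T (∑ j, ⟪e i, b j⟫ • a j), e i⟫ := by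
        simp [map_sum, sum_inner, real_inner_smul_left]
    _ = ∑ i, σ i * ⟪T (e i), e i⟫ := by
        simp [hab, real_inner_smul_left]

section Tail

variable {E : Type*} [NormedAddCommGroup E] [InnerProductSpace ℝ E] {s r : ℕ}
  (e : OrthonormalBasis (Fin s) ℝ E) {σ : Fin s → ℝ} {a b : Fin r → E}

theorem tail_sum_le_tail_sum_norm_mul_norm (hab : ∀ i, ∑ j, ⟪e i, b j⟫ • a j = σ i • e i)
    (hσ₀ : ∀ i, 0 ≤ σ i) (hσ : Antitone σ) (k : ℕ) :
    ∑ i ∈ univ.filter (fun i : Fin s => k ≤ (i : ℕ)), σ i ≤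
      ∑ j ∈ univ.filter (fun j : Fin r => k ≤ (j : ℕ)), ‖a j‖ * ‖b j‖ := by
  classical
  have : FiniteDimensional ℝ E := e.toBasis.finiteDimensional_of_finite
  set K := Submodule.span ℝ
    (((univ.filter (fun j : Fin r => (j : ℕ) < k)).image a : Finset E) : Set E)
  have hK : Module.finrank ℝ K ≤ k := by
    refine (finrank_span_finset_le_card _).trans (card_image_le.trans ?_)
    simp [Fin.card_filter_val_lt]
  have hdim : Module.finrank ℝ K + Module.finrank ℝ Kᗮ = s := by
    rw [K.finrank_add_finrank_orthogonal, Module.finrank_eq_card_basis e.toBasis,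
      Fintype.card_fin]
  set P := Kᗮ.starProjection
  set p : Fin s → ℝ := fun i => ⟪P (e i), e i⟫
  have hp₀ : ∀ i, 0 ≤ p i := fun i => Kᗮ.re_inner_starProjection_nonneg (e i)
  have hp₁ : ∀ i, p i ≤ 1 := fun i => calc
    p i ≤ ‖P (e i)‖ * ‖e i‖ := real_inner_le_norm _ _
    _ ≤ ‖e i‖ * ‖e i‖ := by gcongr; exact Kᗮ.norm_starProjection_apply_le _
    _ = 1 := by simp [e.orthonormal.1 i]
  have hPa : ∀ j : Fin r, (j : ℕ) < k → P (a j) = 0 := fun j hj =>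
    Submodule.starProjection_orthogonal_apply_eq_zero
      (Submodule.subset_span (by simpa using ⟨j, hj, rfl⟩))
  have hupper : ∑ j, ⟪P (a j), b j⟫ ≤
      ∑ j ∈ univ.filter (fun j : Fin r => k ≤ (j : ℕ)), ‖a j‖ * ‖b j‖ := by
    have hhead : ∑ j ∈ univ.filter (fun j : Fin r => ¬ k ≤ (j : ℕ)), ⟪P (a j), b j⟫ = 0 :=
      Finset.sum_eq_zero fun j hj => by rw [hPa j (by simpa using hj), inner_zero_left]
    rw [← Finset.sum_filter_add_sum_filter_not univ (fun j : Fin r => k ≤ (j : ℕ)), hhead,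
      add_zero]
    gcongr with j
    exact (real_inner_le_norm _ _).trans
      (mul_le_mul_of_nonneg_right (Kᗮ.norm_starProjection_apply_le _) (norm_nonneg _))
  have hp : (s : ℝ) - k ≤ ∑ i, p i := by
    rw [e.sum_inner_starProjection_self, ← hdim]
    push_cast
    linarith [(Nat.cast_le (α := ℝ)).2 hK]
  calc ∑ i ∈ univ.filter (fun i : Fin s => k ≤ (i : ℕ)), σ i ≤ ∑ i, σ i * p i :=
        hσ.tail_sum_le_sum_mul hσ₀ hp₀ hp₁ hp
    _ = ∑ j, ⟪P (a j), b j⟫ := (e.sum_inner_map_eq_sum_mul_inner hab P).symm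
    _ ≤ _ := hupper

theorem sum_div_le_sum_norm_mul_norm_div (hsr : s ≤ r)
    (hab : ∀ i, ∑ j, ⟪e i, b j⟫ • a j = σ i • e i) (hσ₀ : ∀ i, 0 ≤ σ i) (hσ : Antitone σ)
    {w : Fin r → ℝ} (hw₀ : ∀ j, 0 < w j) (hw : Antitone w) :
    ∑ i, σ i / w (Fin.castLE hsr i) ≤ ∑ j, ‖a j‖ * ‖b j‖ / w j := by
  set σ' : Fin r → ℝ := Function.extend (Fin.castLE hsr) σ 0
  have hσ' : ∀ G : Fin r → ℝ → ℝ, (∀ j, G j 0 = 0) →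
      ∑ j, G j (σ' j) = ∑ i, G (Fin.castLE hsr i) (σ i) :=
    fun G hG => (Fin.castLE_injective hsr).sum_extend_zero σ G hG
  have habel := Fin.sum_mul_nonneg_of_forall_tail_sum_nonneg (fun j => ‖a j‖ * ‖b j‖ - σ' j)
    (fun j => (w j)⁻¹) (fun i j hij => inv_anti₀ (hw₀ j) (hw hij))
    (fun j => (inv_pos.2 (hw₀ j)).le)
    (fun k => by
      rw [Finset.sum_sub_distrib, sub_nonneg, Finset.sum_filter,
        hσ' (fun j x => if k ≤ (j : ℕ) then x else 0) (fun j => ite_self 0), ← Finset.sum_filter]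
      exact tail_sum_le_tail_sum_norm_mul_norm e hab hσ₀ hσ k)
  rw [← hσ' (fun j x => x / w j) (fun j => zero_div _)]
  simp only [← div_eq_mul_inv, sub_div, Finset.sum_sub_distrib, sub_nonneg] at habel
  exact habel

end Tail

def euclideanCol {α ι : Type*} (M : Matrix α ι ℝ) (j : ι) : EuclideanSpace ℝ α :=
  WithLp.toLp 2 (Mᵀ j)

@[simp]
theorem euclideanCol_apply {α ι : Type*} (M : Matrix α ι ℝ) (j : ι) (i : α) :
    euclideanCol M j i = M i j := rfl

theorem frobSq_eq_sum_norm_sq_euclideanCol {m n : ℕ} (M : Matrix (Fin m) (Fin n) ℝ) :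
    frobSq M = ∑ j, ‖euclideanCol M j‖ ^ 2 := by
  rw [frobSq, Finset.sum_comm]
  simp [EuclideanSpace.norm_sq_eq]

theorem euclideanCol_mul_diagonal {α ι : Type*} [Fintype ι] [DecidableEq ι] (M : Matrix α ι ℝ)
    (d : ι → ℝ) (j : ι) : euclideanCol (M * diagonal d) j = d j • euclideanCol M j := by
  ext i
  simp [mul_comm]

theorem orthonormal_euclideanCol {α ι : Type*} [Fintype α] [DecidableEq ι] {U : Matrix α ι ℝ}
    (hU : Uᵀ * U = 1) : Orthonormal ℝ (euclideanCol U) := by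
  rw [orthonormal_iff_ite]
  intro i i'
  simpa [mul_apply, one_apply, PiLp.inner_apply, mul_comm] using congrFun (congrFun hU i) i'

theorem norm_euclideanCol_transpose_mul_le {α β ι : Type*} [Fintype α] [Fintype β]
    [DecidableEq β] {U : Matrix α β ℝ} (hU : Uᵀ * U = 1) (M : Matrix α ι ℝ) (j : ι) :
    ‖euclideanCol (Uᵀ * M) j‖ ≤ ‖euclideanCol M j‖ := by
  have hbessel := (orthonormal_euclideanCol hU).sum_inner_products_le (euclideanCol M j)
    (s := univ)
  rw [← pow_le_pow_iff_left₀ (norm_nonneg _) (norm_nonneg _) two_ne_zero,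
    EuclideanSpace.norm_sq_eq]
  simpa [mul_apply, PiLp.inner_apply, mul_comm] using hbessel

theorem sum_inner_basisFun_smul_euclideanCol {ι κ : Type*} [Fintype ι] [DecidableEq ι]
    [Fintype κ] {P Q : Matrix ι κ ℝ} {σ : ι → ℝ} (hPQ : P * Qᵀ = diagonal σ) (i : ι) :
    ∑ j, ⟪EuclideanSpace.basisFun ι ℝ i, euclideanCol Q j⟫ • euclideanCol P j =
      σ i • EuclideanSpace.basisFun ι ℝ i := by
  ext p
  have h := congrFun (congrFun hPQ p) i
  simp only [mul_apply, transpose_apply, diagonal_apply] at h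
  by_cases hpi : p = i
  · subst hpi; simp [EuclideanSpace.inner_single_left, h, mul_comm]
  · simp [EuclideanSpace.inner_single_left, h, mul_comm, hpi]

theorem frobSq_eq_trace {m n : ℕ} (M : Matrix (Fin m) (Fin n) ℝ) :
    frobSq M = trace (M * Mᵀ) := by
  simp [frobSq, trace, mul_apply, sq]

theorem frobSq_mul_mul_eq {m s r : ℕ} {U : Matrix (Fin m) (Fin s) ℝ}
    {F : Matrix (Fin s) (Fin r) ℝ} (hU : Uᵀ * U = 1) (hF : F * Fᵀ = 1)
    (M : Matrix (Fin s) (Fin s) ℝ) : frobSq (U * M * F) = frobSq M := by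
  rw [frobSq_eq_trace, frobSq_eq_trace]
  simp only [transpose_mul, Matrix.mul_assoc]
  rw [← Matrix.mul_assoc F, hF, Matrix.one_mul, trace_mul_comm]
  simp only [Matrix.mul_assoc, hU, Matrix.mul_one]

theorem frobSq_diagonal {n : ℕ} (d : Fin n → ℝ) : frobSq (diagonal d) = ∑ i, d i ^ 2 := by
  simp [frobSq, diagonal_apply]

theorem Matrix.submatrix_one_mul_transpose_self {ι κ R : Type*} [Fintype κ] [DecidableEq ι]
    [DecidableEq κ] [Semiring R] {f : ι → κ} (hf : f.Injective) :
    (1 : Matrix κ κ R).submatrix f id * ((1 : Matrix κ κ R).submatrix f id)ᵀ = 1 := by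
  ext i i'
  simp [mul_apply, one_apply, hf.eq_iff]

theorem Matrix.submatrix_one_mul_diagonal {ι κ R : Type*} [Fintype ι] [Fintype κ]
    [DecidableEq ι] [DecidableEq κ] [Semiring R] (f : ι → κ) (v : κ → R) :
    (1 : Matrix κ κ R).submatrix f id * diagonal v =
      diagonal (v ∘ f) * (1 : Matrix κ κ R).submatrix f id := by
  ext i j
  by_cases h : f i = j <;> simp [one_apply, h]

theorem Matrix.inv_diagonal_of_ne_zero {ι K : Type*} [Fintype ι] [DecidableEq ι] [Field K]
    {v : ι → K} (hv : ∀ i, v i ≠ 0) : (diagonal v)⁻¹ = diagonal fun i => (v i)⁻¹ :=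
  inv_eq_right_inv (by simp [diagonal_mul_diagonal, hv])

theorem exists_mul_transpose_eq_and_sum_div_eq {m n r s : ℕ} (hsr : s ≤ r)
    {w : Fin r → ℝ} (hw₀ : ∀ j, 0 < w j) {U : Matrix (Fin m) (Fin s) ℝ}
    {V : Matrix (Fin n) (Fin s) ℝ} (hU : Uᵀ * U = 1) (hV : Vᵀ * V = 1) {σ : Fin s → ℝ}
    (hσ₀ : ∀ i, 0 ≤ σ i) :
    ∃ (A : Matrix (Fin m) (Fin r) ℝ) (B : Matrix (Fin n) (Fin r) ℝ),
      U * diagonal σ * Vᵀ = A * Bᵀ ∧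
      ∑ i, σ i / w (Fin.castLE hsr i) = 1 / 2 * (frobSq (A * (diagonal w)⁻¹) + frobSq B) := by
  set J := (1 : Matrix (Fin r) (Fin r) ℝ).submatrix (Fin.castLE hsr) id
  have hJ : J * Jᵀ = 1 := submatrix_one_mul_transpose_self (Fin.castLE_injective hsr)
  refine ⟨U * diagonal (fun i => √(σ i * w (Fin.castLE hsr i))) * J,
    V * diagonal (fun i => √(σ i / w (Fin.castLE hsr i))) * J, ?_, ?_⟩
  · have hsqrt : ∀ i, √(σ i * w (Fin.castLE hsr i)) * √(σ i / w (Fin.castLE hsr i)) = σ i :=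
      fun i => by
        have := hw₀ (Fin.castLE hsr i)
        rw [← Real.sqrt_mul (mul_nonneg (hσ₀ i) this.le)]
        convert Real.sqrt_mul_self (hσ₀ i) using 2
        field_simp
    simp only [transpose_mul, diagonal_transpose, Matrix.mul_assoc]
    rw [← Matrix.mul_assoc J, hJ, Matrix.one_mul, ← Matrix.mul_assoc (diagonal _),
      diagonal_mul_diagonal, funext hsqrt]
  · rw [inv_diagonal_of_ne_zero fun j => (hw₀ j).ne', Matrix.mul_assoc _ J,
      submatrix_one_mul_diagonal, ← Matrix.mul_assoc, Matrix.mul_assoc U, diagonal_mul_diagonal,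
      frobSq_mul_mul_eq hU hJ, frobSq_mul_mul_eq hV hJ, frobSq_diagonal, frobSq_diagonal,
      ← Finset.sum_add_distrib, Finset.mul_sum]
    refine Finset.sum_congr rfl fun i _ => ?_
    have := hw₀ (Fin.castLE hsr i)
    simp only [mul_pow, Real.sq_sqrt (mul_nonneg (hσ₀ i) this.le),
      Real.sq_sqrt (div_nonneg (hσ₀ i) this.le), Function.comp_apply]
    field_simp
    ring

theorem sum_div_le_half_frobSq_of_mul_transpose_eq {m n r s : ℕ} (hsr : s ≤ r)
    {w : Fin r → ℝ} (hw₀ : ∀ j, 0 < w j) (hw : Antitone w) {U : Matrix (Fin m) (Fin s) ℝ}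
    {V : Matrix (Fin n) (Fin s) ℝ} (hU : Uᵀ * U = 1) (hV : Vᵀ * V = 1) {σ : Fin s → ℝ}
    (hσ₀ : ∀ i, 0 ≤ σ i) (hσ : Antitone σ) {A : Matrix (Fin m) (Fin r) ℝ}
    {B : Matrix (Fin n) (Fin r) ℝ} (hAB : U * diagonal σ * Vᵀ = A * Bᵀ) :
    ∑ i, σ i / w (Fin.castLE hsr i) ≤ 1 / 2 * (frobSq (A * (diagonal w)⁻¹) + frobSq B) := by
  have hPQ : (Uᵀ * A) * (Vᵀ * B)ᵀ = diagonal σ := by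
    calc (Uᵀ * A) * (Vᵀ * B)ᵀ = Uᵀ * (A * Bᵀ) * V := by
          simp only [transpose_mul, transpose_transpose, Matrix.mul_assoc]
      _ = diagonal σ := by
          rw [← hAB, ← Matrix.mul_assoc Uᵀ, ← Matrix.mul_assoc Uᵀ, hU, Matrix.one_mul,
            Matrix.mul_assoc, hV, Matrix.mul_one]
  calc ∑ i, σ i / w (Fin.castLE hsr i)
      ≤ ∑ j, ‖euclideanCol (Uᵀ * A) j‖ * ‖euclideanCol (Vᵀ * B) j‖ / w j :=
        sum_div_le_sum_norm_mul_norm_div (EuclideanSpace.basisFun (Fin s) ℝ) hsr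
          (sum_inner_basisFun_smul_euclideanCol hPQ) hσ₀ hσ hw₀ hw
    _ ≤ ∑ j, ‖euclideanCol A j‖ * ‖euclideanCol B j‖ / w j := by
        gcongr with j
        · exact (hw₀ j).le
        · exact norm_euclideanCol_transpose_mul_le hU A j
        · exact norm_euclideanCol_transpose_mul_le hV B j
    _ ≤ ∑ j, 1 / 2 * (‖(w j)⁻¹ • euclideanCol A j‖ ^ 2 + ‖euclideanCol B j‖ ^ 2) := by
        gcongr with j
        rw [norm_smul, Real.norm_of_nonneg (inv_nonneg.2 (hw₀ j).le)]
        have := two_mul_le_add_sq ((w j)⁻¹ * ‖euclideanCol A j‖) ‖euclideanCol B j‖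
        rw [div_eq_inv_mul, ← mul_assoc]
        linarith
    _ = 1 / 2 * (frobSq (A * (diagonal w)⁻¹) + frobSq B) := by
        simp only [inv_diagonal_of_ne_zero fun j => (hw₀ j).ne',
          frobSq_eq_sum_norm_sq_euclideanCol, euclideanCol_mul_diagonal,
          Finset.mul_sum, Finset.sum_add_distrib, mul_add]

theorem stmt8_general {m n r s : ℕ}
    (w : Fin r → ℝ) (hw_pos : ∀ i, 0 < w i) (hw_mono : Antitone w)
    (X : Matrix (Fin m) (Fin n) ℝ) (hsr : s ≤ r)
    (U : Matrix (Fin m) (Fin s) ℝ) (V : Matrix (Fin n) (Fin s) ℝ)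
    (hU : Uᵀ * U = 1) (hV : Vᵀ * V = 1)
    (σ : Fin s → ℝ) (hσ_pos : ∀ i, 0 < σ i) (hσ_mono : Antitone σ)
    (hX : X = U * Matrix.diagonal σ * Vᵀ) :
    IsLeast { y : ℝ | ∃ (A : Matrix (Fin m) (Fin r) ℝ) (B : Matrix (Fin n) (Fin r) ℝ),
        X = A * Bᵀ ∧ y = (1/2) * (frobSq (A * (Matrix.diagonal w)⁻¹) + frobSq B) }
      (∑ i, σ i / w (Fin.castLE hsr i)) := by
  have hσ₀ : ∀ i, 0 ≤ σ i := fun i => (hσ_pos i).le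
  subst hX
  refine ⟨exists_mul_transpose_eq_and_sum_div_eq hsr hw_pos hU hV hσ₀, ?_⟩
  rintro y ⟨A, B, hAB, rfl⟩
  exact sum_div_le_half_frobSq_of_mul_transpose_eq hsr hw_pos hw_mono hU hV hσ₀ hσ_mono hAB

/-- For `W = diag w` (`r × r`, nonincreasing positive) and `X` of rank `s ≤ r` with
reduced SVD `X = U (diag σ) Vᵀ` (`σ` nonincreasing positive), the minimum of
`(1/2)(‖A W⁻¹‖_F² + ‖B‖_F²)` over all factorizations `X = A Bᵀ` is attained
and equals `∑ᵢ σᵢ / Wᵢᵢ`. -/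
theorem stmt8 {m n r s : ℕ}
    (w : Fin r → ℝ) (hw_pos : ∀ i, 0 < w i) (hw_mono : Antitone w)
    (X : Matrix (Fin m) (Fin n) ℝ) (hrank : X.rank = s) (hsr : s ≤ r)
    (U : Matrix (Fin m) (Fin s) ℝ) (V : Matrix (Fin n) (Fin s) ℝ)
    (hU : Uᵀ * U = 1) (hV : Vᵀ * V = 1)
    (σ : Fin s → ℝ) (hσ_pos : ∀ i, 0 < σ i) (hσ_mono : Antitone σ)
    (hX : X = U * Matrix.diagonal σ * Vᵀ) :
    IsLeast { y : ℝ | ∃ (A : Matrix (Fin m) (Fin r) ℝ) (B : Matrix (Fin n) (Fin r) ℝ),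
        X = A * Bᵀ ∧ y = (1/2) * (frobSq (A * (Matrix.diagonal w)⁻¹) + frobSq B) }
      (∑ i, σ i / w (Fin.castLE hsr i)) :=
  stmt8_general w hw_pos hw_mono X hsr U V hU hV σ hσ_pos hσ_mono hX
end

section
/- Let X ∈ ℝ^{m×n} have rank s ≥ 1 with reduced singular value decomposition X = U·Σ·Vᵀ, where U ∈ ℝ^{m×s} and V ∈ ℝ^{n×s} have orthonormal columns and Σ ∈ ℝ^{s×s} is diagonal with strictly positive diagonal entries. Suppose X = A·Bᵀ for some A ∈ ℝ^{m×r} and B ∈ ℝ^{n×r}, and let A = U_A·Σ_A·V_Aᵀ be a compact singular value decomposition of A, where U_A ∈ ℝ^{m×ρ} and V_A ∈ ℝ^{r×ρ} have orthonormal columns, Σ_A ∈ ℝ^{ρ×ρ} is diagonal with strictly positive entries, and ρ = rank(A). Then Uᵀ·U_A·U_Aᵀ·U = I_s; equivalently, the matrix U_Aᵀ·U ∈ ℝ^{ρ×s} has orthonormal columns. -/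
open Matrix

/-!
Every column of `U` lies in the column space of `X = A Bᵀ`, hence in that of `A`, which is the
column space of `U_A`. Since `U_A` has orthonormal columns, `U_A U_Aᵀ` is the orthogonal projection
onto that space, so `U_A U_Aᵀ U = U` and `Uᵀ U_A U_Aᵀ U = Uᵀ U = 1`.
-/

theorem Matrix.mul_transpose_mul_mul_of_transpose_mul_self {m k l R : Type*} [Fintype m]
    [Fintype k] [DecidableEq k] [CommRing R]
    {P : Matrix m k R} (hP : Pᵀ * P = 1) (C : Matrix k l R) :
    P * Pᵀ * (P * C) = P * C := by
  rw [Matrix.mul_assoc, ← Matrix.mul_assoc Pᵀ, hP, Matrix.one_mul]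

theorem Matrix.eq_mul_mul_diagonal_inv_of_eq_mul_diagonal_mul_transpose {m n k K : Type*}
    [Fintype n] [Fintype k] [DecidableEq k] [Field K]
    {X : Matrix m n K} {U : Matrix m k K} {V : Matrix n k K} {d : k → K}
    (hd : ∀ i, d i ≠ 0) (hV : Vᵀ * V = 1) (hX : X = U * diagonal d * Vᵀ) :
    U = X * (V * diagonal d⁻¹) := by
  have hdd : diagonal d * diagonal d⁻¹ = 1 := by
    rw [diagonal_mul_diagonal, ← diagonal_one]
    exact congrArg diagonal (funext fun i => mul_inv_cancel₀ (hd i))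
  rw [hX, Matrix.mul_assoc, ← Matrix.mul_assoc Vᵀ, hV, Matrix.one_mul, Matrix.mul_assoc, hdd,
    Matrix.mul_one]

theorem stmt19_general {m n r s ρ : ℕ}
    (X : Matrix (Fin m) (Fin n) ℝ)
    (U : Matrix (Fin m) (Fin s) ℝ) (V : Matrix (Fin n) (Fin s) ℝ)
    (d : Fin s → ℝ) (hd : ∀ i, 0 < d i)
    (hU : Uᵀ * U = 1) (hV : Vᵀ * V = 1)
    (hX : X = U * Matrix.diagonal d * Vᵀ)
    (A : Matrix (Fin m) (Fin r) ℝ) (B : Matrix (Fin n) (Fin r) ℝ)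
    (hAB : X = A * Bᵀ)
    (UA : Matrix (Fin m) (Fin ρ) ℝ) (VA : Matrix (Fin r) (Fin ρ) ℝ)
    (dA : Fin ρ → ℝ)
    (hUA : UAᵀ * UA = 1)
    (hA : A = UA * Matrix.diagonal dA * VAᵀ) :
    Uᵀ * UA * UAᵀ * U = 1 := by
  have hU_col : U = UA * (diagonal dA * VAᵀ * Bᵀ * (V * diagonal d⁻¹)) := by
    rw [eq_mul_mul_diagonal_inv_of_eq_mul_diagonal_mul_transpose (fun i => (hd i).ne') hV hX,
      hAB, hA]
    simp only [Matrix.mul_assoc]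
  have hU_fixed : UA * UAᵀ * U = U := by
    rw [hU_col]
    exact mul_transpose_mul_mul_of_transpose_mul_self hUA _
  calc Uᵀ * UA * UAᵀ * U = Uᵀ * (UA * UAᵀ * U) := by simp only [Matrix.mul_assoc]
    _ = 1 := by rw [hU_fixed, hU]

/-- Let `X` have rank `s ≥ 1` with reduced SVD `X = U S Vᵀ`, suppose `X = A Bᵀ` and let
`A = U_A Σ_A V_Aᵀ` be a compact SVD of `A` with `ρ = rank A`.  Then
`Uᵀ U_A U_Aᵀ U = I_s`, i.e. `U_Aᵀ U` has orthonormal columns. -/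
theorem stmt19 {m n r s ρ : ℕ} (hs : 1 ≤ s)
    (X : Matrix (Fin m) (Fin n) ℝ) (hrank : X.rank = s)
    (U : Matrix (Fin m) (Fin s) ℝ) (V : Matrix (Fin n) (Fin s) ℝ)
    (d : Fin s → ℝ) (hd : ∀ i, 0 < d i)
    (hU : Uᵀ * U = 1) (hV : Vᵀ * V = 1)
    (hX : X = U * Matrix.diagonal d * Vᵀ)
    (A : Matrix (Fin m) (Fin r) ℝ) (B : Matrix (Fin n) (Fin r) ℝ)
    (hAB : X = A * Bᵀ)
    (UA : Matrix (Fin m) (Fin ρ) ℝ) (VA : Matrix (Fin r) (Fin ρ) ℝ)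
    (dA : Fin ρ → ℝ) (hdA : ∀ i, 0 < dA i)
    (hUA : UAᵀ * UA = 1) (hVA : VAᵀ * VA = 1) (hρ : A.rank = ρ)
    (hA : A = UA * Matrix.diagonal dA * VAᵀ) :
    Uᵀ * UA * UAᵀ * U = 1 :=
  stmt19_general X U V d hd hU hV hX A B hAB UA VA dA hUA hA
end
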